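/- arXiv:2512.23671 — 8 statements merged into one kernel-verified Lean document; each statement's English description precedes it below -/
import Mathlib

section
/- Consider online gradient descent θ_{t+1} = θ_t − η g_t(θ_t) with constant step size η > 0. Suppose each g_t satisfies ‖g_t(θ)‖₂ ≤ L for all θ, and there are thresholds h_t ≥ 0 such that ⟨θ, g_t(θ)⟩ ≥ 0 whenever ‖θ‖₂ > h_t. Then for every T, ‖θ_{T+1}‖₂² ≤ ‖θ₁‖₂² + η² L² T + 2 η L Σ_{t=1}^{T} h_t. -/
/-- Online gradient descent with Lipschitz and restorative (sub)gradients has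
bounded iterates: `‖θ_{T+1}‖² ≤ ‖θ₁‖² + η²L²T + 2ηL Σ_{t=1}^T h_t`. -/
theorem stmt_3 {d : ℕ} (η L : ℝ) (hη : 0 < η)
    (g : ℕ → EuclideanSpace ℝ (Fin d) → EuclideanSpace ℝ (Fin d))
    (h : ℕ → ℝ) (hh : ∀ t, 0 ≤ h t)
    (hL : ∀ t θ, ‖g t θ‖ ≤ L)
    (hrest : ∀ t θ, h t < ‖θ‖ → (inner ℝ θ (g t θ) : ℝ) ≥ 0)
    (θ : ℕ → EuclideanSpace ℝ (Fin d))
    (hupd : ∀ t ≥ 1, θ (t + 1) = θ t - η • g t (θ t)) :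
    ∀ T : ℕ, ‖θ (T + 1)‖ ^ 2 ≤ ‖θ 1‖ ^ 2 + η ^ 2 * L ^ 2 * T
      + 2 * η * L * ∑ t ∈ Finset.Icc 1 T, h t := by
  have hL0 : 0 ≤ L := le_trans (norm_nonneg _) (hL 0 0)
  -- one-step bound
  have step : ∀ t ≥ 1, ‖θ (t+1)‖^2 ≤ ‖θ t‖^2 + η^2 * L^2 + 2 * η * L * h t := by
    intro t ht
    rw [hupd t ht]
    have hexp : ‖θ t - η • g t (θ t)‖^2
        = ‖θ t‖^2 - 2 * (η * inner ℝ (θ t) (g t (θ t))) + ‖η • g t (θ t)‖^2 := by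
      rw [norm_sub_sq_real, real_inner_smul_right]
    rw [hexp]
    have hgnorm : ‖η • g t (θ t)‖^2 ≤ η^2 * L^2 := by
      rw [norm_smul]
      have : |η| * ‖g t (θ t)‖ ≤ η * L := by
        rw [abs_of_pos hη]
        exact mul_le_mul_of_nonneg_left (hL _ _) hη.le
      calc (|η| * ‖g t (θ t)‖)^2 ≤ (η * L)^2 := by
            apply pow_le_pow_left₀ (by positivity) this
        _ = η^2 * L^2 := by ring
    have hinner : -(inner ℝ (θ t) (g t (θ t)) : ℝ) ≤ L * h t := by
      rcases le_or_gt (‖θ t‖) (h t) with hc | hc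
      · have := abs_real_inner_le_norm (θ t) (g t (θ t))
        have h1 : |(inner ℝ (θ t) (g t (θ t)) : ℝ)| ≤ L * h t := by
          calc |(inner ℝ (θ t) (g t (θ t)) : ℝ)| ≤ ‖θ t‖ * ‖g t (θ t)‖ := this
            _ ≤ h t * L := mul_le_mul hc (hL _ _) (norm_nonneg _) (hh t)
            _ = L * h t := mul_comm _ _
        linarith [neg_abs_le (inner ℝ (θ t) (g t (θ t)) : ℝ)]
      · have := hrest t (θ t) hc
        have : (0:ℝ) ≤ L * h t := mul_nonneg hL0 (hh t)
        linarith [hrest t (θ t) hc]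
    nlinarith [hη.le]
  intro T
  induction T with
  | zero => simp
  | succ T ih =>
      have hs : ∑ t ∈ Finset.Icc 1 (T+1), h t
          = (∑ t ∈ Finset.Icc 1 T, h t) + h (T+1) := by
        rw [Finset.sum_Icc_succ_top (by omega)]
      have := step (T+1) (by omega)
      push_cast
      rw [hs]
      push_cast at ih
      nlinarith [mul_nonneg (mul_nonneg (mul_nonneg (by norm_num : (0:ℝ) ≤ 2) hη.le) hL0) (hh (T+1))]
end

section
/- Consider lazy gradient descent: θ_t = Π_{C_t}(θ̃_t), θ̃_{t+1} = θ̃_t − η g_t(θ_t), with η > 0. Suppose for each t: (i) ‖g_t(θ)‖₂ ≤ L for all θ; (ii) ⟨θ, g_t(θ)⟩ ≥ 0 whenever ‖θ‖₂ > h_t; (iii) for every θ on the boundary of C_t, −g_t(θ) lies in the tangent cone T_{C_t}(θ). Then ‖θ̃_{T+1}‖₂² ≤ ‖θ̃₁‖₂² + η² L² T + 2 η L Σ_{t=1}^{T} h_t. -/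
/-- Tangent cone of a set `C` at `x`, as defined in the paper. -/
def paperTangentCone {E : Type*} [NormedAddCommGroup E] [NormedSpace ℝ E]
    (C : Set E) (x : E) : Set E :=
  closure {y | ∃ β > (0:ℝ), ∀ ε : ℝ, 0 ≤ ε → ε ≤ β → x + ε • y ∈ C}


lemma tangent_inner_nonpos {d : ℕ} {C : Set (EuclideanSpace ℝ (Fin d))}
    {x w v : EuclideanSpace ℝ (Fin d)}
    (hx : ∀ y ∈ C, ‖w - x‖ ≤ ‖w - y‖)
    (hv : v ∈ closure {y : EuclideanSpace ℝ (Fin d) |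
      ∃ β > (0:ℝ), ∀ ε : ℝ, 0 ≤ ε → ε ≤ β → x + ε • y ∈ C}) :
    (inner ℝ (w - x) v : ℝ) ≤ 0 := by
  have hclosed : IsClosed {u : EuclideanSpace ℝ (Fin d) | (inner ℝ (w - x) u : ℝ) ≤ 0} :=
    isClosed_le (Continuous.inner continuous_const continuous_id) continuous_const
  refine hclosed.closure_subset_iff.mpr ?_ hv
  rintro u ⟨β, hβ, hu⟩
  simp only [Set.mem_setOf_eq]
  by_contra hc
  push_neg at hc
  set c : ℝ := inner ℝ (w - x) u with hcdef
  set K : ℝ := ‖u‖ ^ 2 with hKdef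
  have hK : 0 ≤ K := sq_nonneg _
  set ε : ℝ := min β (c / (K + 1)) with hε
  have hε0 : 0 < ε := lt_min hβ (by positivity)
  have hεβ : ε ≤ β := min_le_left _ _
  have hmem := hu ε hε0.le hεβ
  have h1 := hx _ hmem
  have h2 : ‖w - (x + ε • u)‖ ^ 2 = ‖w - x‖ ^ 2 - 2 * ε * c + ε ^ 2 * K := by
    have he : w - (x + ε • u) = (w - x) - ε • u := by abel
    rw [he, norm_sub_sq_real, real_inner_smul_right, norm_smul]
    rw [Real.norm_eq_abs, abs_of_nonneg hε0.le]
    ring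
  have h3 : ‖w - x‖ ^ 2 ≤ ‖w - (x + ε • u)‖ ^ 2 :=
    pow_le_pow_left₀ (norm_nonneg _) h1 2
  have h4 : ε * (K + 1) ≤ c := by
    have := min_le_right β (c / (K + 1))
    calc ε * (K + 1) ≤ (c / (K + 1)) * (K + 1) := by
          apply mul_le_mul_of_nonneg_right this (by positivity)
      _ = c := by field_simp
  nlinarith [hε0, hc, hK]

lemma proj_mem_frontier {d : ℕ} {C : Set (EuclideanSpace ℝ (Fin d))}
    {x w : EuclideanSpace ℝ (Fin d)} (hw : w ∉ C) (hxC : x ∈ C)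
    (hx : ∀ y ∈ C, ‖w - x‖ ≤ ‖w - y‖) : x ∈ frontier C := by
  refine ⟨subset_closure hxC, ?_⟩
  intro hint
  obtain ⟨r, hr, hball⟩ := Metric.isOpen_iff.mp isOpen_interior x hint
  have hwx : w ≠ x := fun hEq => hw (hEq ▸ hxC)
  have hn : 0 < ‖w - x‖ := by
    rw [norm_pos_iff]; exact sub_ne_zero.mpr hwx
  set t : ℝ := min (1/2) (r / (2 * ‖w - x‖)) with ht
  have ht0 : 0 < t := lt_min (by norm_num) (by positivity)
  have ht1 : t < 1 := lt_of_le_of_lt (min_le_left _ _) (by norm_num)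
  have hyball : x + t • (w - x) ∈ Metric.ball x r := by
    rw [Metric.mem_ball, dist_eq_norm]
    have : x + t • (w - x) - x = t • (w - x) := by abel
    rw [this, norm_smul, Real.norm_eq_abs, abs_of_nonneg ht0.le]
    have htr : t ≤ r / (2 * ‖w - x‖) := min_le_right _ _
    have : t * ‖w - x‖ ≤ (r / (2 * ‖w - x‖)) * ‖w - x‖ :=
      mul_le_mul_of_nonneg_right htr (norm_nonneg _)
    have heq : (r / (2 * ‖w - x‖)) * ‖w - x‖ = r / 2 := by field_simp
    linarith
  have hyC : x + t • (w - x) ∈ C := interior_subset (hball hyball)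
  have hle := hx _ hyC
  have heq2 : w - (x + t • (w - x)) = (1 - t) • (w - x) := by module
  rw [heq2, norm_smul, Real.norm_eq_abs, abs_of_nonneg (by linarith)] at hle
  nlinarith


/-- Hidden iterates of lazy gradient descent stay bounded under Lipschitzness,
restorativity, and inward flow:
`‖θ̃_{T+1}‖² ≤ ‖θ̃₁‖² + η²L²T + 2ηL Σ_{t=1}^T h_t`. -/
theorem stmt_6 {d : ℕ} (η L : ℝ) (hη : 0 < η)
    (C : ℕ → Set (EuclideanSpace ℝ (Fin d)))
    (hne : ∀ t, (C t).Nonempty) (hcl : ∀ t, IsClosed (C t)) (hcv : ∀ t, Convex ℝ (C t))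
    (g : ℕ → EuclideanSpace ℝ (Fin d) → EuclideanSpace ℝ (Fin d))
    (h : ℕ → ℝ) (hh : ∀ t, 0 ≤ h t)
    (hL : ∀ t θ, ‖g t θ‖ ≤ L)
    (hrest : ∀ t θ, h t < ‖θ‖ → (inner ℝ θ (g t θ) : ℝ) ≥ 0)
    (hflow : ∀ t, ∀ θ ∈ frontier (C t), -g t θ ∈ paperTangentCone (C t) θ)
    (w θ : ℕ → EuclideanSpace ℝ (Fin d))
    (hw1 : w 1 ∈ C 1)
    (hproj : ∀ t ≥ 1, θ t ∈ C t ∧ ∀ y ∈ C t, ‖w t - θ t‖ ≤ ‖w t - y‖)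
    (hupd : ∀ t ≥ 1, w (t + 1) = w t - η • g t (θ t)) :
    ∀ T : ℕ, ‖w (T + 1)‖ ^ 2 ≤ ‖w 1‖ ^ 2 + η ^ 2 * L ^ 2 * T
      + 2 * η * L * ∑ t ∈ Finset.Icc 1 T, h t := by
  have hL0 : 0 ≤ L := le_trans (norm_nonneg _) (hL 0 0)
  have step : ∀ t, 1 ≤ t → ‖w (t+1)‖ ^ 2 ≤ ‖w t‖ ^ 2 + η^2 * L^2 + 2*η*L*h t := by
    intro t ht
    obtain ⟨hθC, hθmin⟩ := hproj t ht
    set G := g t (θ t) with hG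
    have hinner1 : (inner ℝ (w t - θ t) (-G) : ℝ) ≤ 0 := by
      by_cases hwc : w t ∈ C t
      · have hwθ : θ t = w t := by
          have h0 := hθmin _ hwc
          simp only [sub_self, norm_zero] at h0
          have := le_antisymm h0 (norm_nonneg _)
          rw [norm_eq_zero, sub_eq_zero] at this
          exact this.symm
        simp [hwθ]
      · exact tangent_inner_nonpos hθmin
          (hflow t _ (proj_mem_frontier hwc hθC hθmin))
    have hinner2 : -(L * h t) ≤ (inner ℝ (θ t) G : ℝ) := by
      rcases lt_or_ge (h t) ‖θ t‖ with hcase | hcase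
      · have := hrest t (θ t) hcase
        nlinarith [mul_nonneg hL0 (hh t)]
      · have hCS := abs_real_inner_le_norm (θ t) G
        have hGL := hL t (θ t)
        rw [abs_le] at hCS
        have hθn : 0 ≤ ‖θ t‖ := norm_nonneg _
        have hGn : 0 ≤ ‖G‖ := norm_nonneg _
        nlinarith [hCS.1, mul_le_mul hcase hGL hGn (hh t)]
    have hexpand : (inner ℝ (w t - θ t) (-G) : ℝ)
        = -(inner ℝ (w t) G : ℝ) + (inner ℝ (θ t) G : ℝ) := by
      rw [inner_neg_right, inner_sub_left]; ring
    have hwG : -(L * h t) ≤ (inner ℝ (w t) G : ℝ) := by linarith [hexpand ▸ hinner1]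
    rw [hupd t ht]
    have hexp : ‖w t - η • G‖ ^ 2
        = ‖w t‖ ^ 2 - 2*η*(inner ℝ (w t) G : ℝ) + η^2*‖G‖^2 := by
      rw [norm_sub_sq_real, real_inner_smul_right, norm_smul, Real.norm_eq_abs,
        abs_of_nonneg hη.le]
      ring
    have hGL := hL t (θ t)
    have hGn : 0 ≤ ‖G‖ := norm_nonneg _
    nlinarith [sq_nonneg η, mul_le_mul hGL hGL hGn hL0]
  intro T
  induction T with
  | zero => simp
  | succ T ih =>
    have hs := step (T+1) (by omega)
    rw [Finset.sum_Icc_succ_top (by omega : 1 ≤ T+1)]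
    push_cast
    nlinarith [ih, hs]
end

section
/- Let g(θ) ∈ ℝ^{|A|} have coordinates g(θ)_α = 1{y ≤ b^α + θ^α} − α for quantile levels α ∈ A ⊆ (0,1). Suppose |y − b^α| ≤ R for all α ∈ A, and let d_A = min_{α∈A} min(α, 1−α) > 0. Then for any h ≥ R |A|^{3/2} / d_A and any θ with ‖θ‖₂ ≥ h, we have ⟨θ, g(θ)⟩ ≥ h d_A / √|A| − R |A|, and in particular ⟨θ, g(θ)⟩ ≥ 0. -/
/-- Restorativity of the MultiQT loss: if `|y - bᵅ| ≤ R` for all levels,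
`d_A` is the least value of `min(α, 1-α)`, `h ≥ R|A|^{3/2}/d_A`, and `‖θ‖ ≥ h`, then
`⟨θ, g(θ)⟩ ≥ h d_A/√|A| - R|A| ≥ 0`, where `g(θ)_α = 1{y ≤ bᵅ + θᵅ} - α`. -/
theorem stmt_7 {n : ℕ} (hn : 0 < n) (α : Fin n → ℝ)
    (hα : ∀ i, α i ∈ Set.Ioo (0:ℝ) 1)
    (y R : ℝ) (b θ : EuclideanSpace ℝ (Fin n))
    (hR : ∀ i, |y - b i| ≤ R)
    (dA : ℝ) (hdA : IsLeast (Set.range fun i => min (α i) (1 - α i)) dA)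
    (h : ℝ) (hh : R * ((n : ℝ) * Real.sqrt n) / dA ≤ h)
    (hθ : h ≤ ‖θ‖)
    (g : EuclideanSpace ℝ (Fin n))
    (hg : ∀ i, g i = (if y ≤ b i + θ i then (1:ℝ) else 0) - α i) :
    (inner ℝ θ g : ℝ) ≥ h * dA / Real.sqrt n - R * n ∧ (inner ℝ θ g : ℝ) ≥ 0 := by
  obtain ⟨⟨i0, hi0⟩, hlb⟩ := hdA
  have hdApos : 0 < dA := by
    rw [← hi0]
    exact lt_min (hα i0).1 (by linarith [(hα i0).2])
  have hR0 : 0 ≤ R := le_trans (abs_nonneg _) (hR ⟨0, hn⟩)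
  have hn1 : (1:ℝ) ≤ n := by exact_mod_cast hn
  have hsq1 : (1:ℝ) ≤ Real.sqrt n := by
    rw [Real.one_le_sqrt] <;> linarith
  have hsqpos : (0:ℝ) < Real.sqrt n := by linarith
  have hh' : R * ((n : ℝ) * Real.sqrt n) ≤ h * dA := by
    have := (div_le_iff₀ hdApos).mp hh
    linarith
  have hhpos : 0 ≤ h := by
    have : 0 ≤ R * ((n:ℝ) * Real.sqrt n) / dA := by positivity
    linarith
  -- coordinatewise bound
  have key : ∀ i, dA * |θ i| - R ≤ θ i * g i := by
    intro i
    have h1 : dA ≤ α i := (hlb ⟨i, rfl⟩).trans (min_le_left _ _)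
    have h2 : dA ≤ 1 - α i := (hlb ⟨i, rfl⟩).trans (min_le_right _ _)
    have hRi := abs_le.mp (hR i)
    have hgi := hg i
    rcases lt_trichotomy R (θ i) with hc | hc | hc
    · have : y ≤ b i + θ i := by linarith [hRi.2]
      rw [hgi, if_pos this]
      rw [abs_of_pos (by linarith : (0:ℝ) < θ i)]
      nlinarith
    · have hgabs : |g i| ≤ 1 - dA := by
        rw [hgi]
        split_ifs with hcase <;> rw [abs_le] <;> constructor <;> linarith
      have habs : |θ i| ≤ R := by
        rw [abs_le]; constructor <;> simp [← hc] <;> linarith [abs_nonneg (θ i)]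
      have h3 : -(|θ i| * |g i|) ≤ θ i * g i := by
        rw [← abs_mul]; exact neg_abs_le _
      nlinarith [abs_nonneg (θ i)]
    · rcases le_or_gt (-R) (θ i) with hc2 | hc2
      · have hgabs : |g i| ≤ 1 - dA := by
          rw [hgi]
          split_ifs with hcase <;> rw [abs_le] <;> constructor <;> linarith
        have habs : |θ i| ≤ R := abs_le.mpr ⟨hc2, hc.le⟩
        have h3 : -(|θ i| * |g i|) ≤ θ i * g i := by
          rw [← abs_mul]; exact neg_abs_le _
        nlinarith [abs_nonneg (θ i)]
      · have : ¬ y ≤ b i + θ i := by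
          intro hle; linarith [hRi.1]
        rw [hgi, if_neg this]
        rw [abs_of_neg (by linarith : θ i < 0)]
        nlinarith
  have hinner : (inner ℝ θ g : ℝ) = ∑ i, θ i * g i := by
    simp [PiLp.inner_apply, RCLike.inner_apply, conj_trivial, mul_comm]
  have hsumabs : ‖θ‖ ≤ ∑ i, |θ i| := by
    rw [EuclideanSpace.norm_eq]
    have h4 : ∑ i, ‖θ i‖ ^ 2 ≤ (∑ i, |θ i|) ^ 2 := by
      simp only [Real.norm_eq_abs]
      exact Finset.sum_sq_le_sq_sum_of_nonneg (fun i _ => abs_nonneg _)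
    calc Real.sqrt (∑ i, ‖θ i‖ ^ 2) ≤ Real.sqrt ((∑ i, |θ i|) ^ 2) :=
          Real.sqrt_le_sqrt h4
      _ = ∑ i, |θ i| := Real.sqrt_sq (Finset.sum_nonneg fun i _ => abs_nonneg _)
  have hmain : dA * h - R * n ≤ (inner ℝ θ g : ℝ) := by
    rw [hinner]
    have hs : ∑ i, (dA * |θ i| - R) ≤ ∑ i, θ i * g i :=
      Finset.sum_le_sum fun i _ => key i
    have he : ∑ i, (dA * |θ i| - R) = dA * ∑ i, |θ i| - R * n := by
      rw [Finset.sum_sub_distrib, ← Finset.mul_sum, Finset.sum_const]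
      simp [mul_comm]
    have : dA * h ≤ dA * ∑ i, |θ i| :=
      mul_le_mul_of_nonneg_left (le_trans hθ hsumabs) hdApos.le
    linarith
  have hfirst : h * dA / Real.sqrt n - R * n ≤ (inner ℝ θ g : ℝ) := by
    have : h * dA / Real.sqrt n ≤ h * dA := by
      rw [div_le_iff₀ hsqpos]
      nlinarith [mul_le_mul_of_nonneg_left hsq1 (mul_nonneg hhpos hdApos.le)]
    linarith [hmain, this]
  refine ⟨hfirst, ?_⟩
  have : R * n ≤ h * dA / Real.sqrt n := by
    rw [le_div_iff₀ hsqpos]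
    nlinarith [Real.sq_sqrt (by positivity : (0:ℝ) ≤ (n:ℝ))]
  linarith
end

section
/- Let K = {x ∈ ℝ^m : x₁ ≤ x₂ ≤ … ≤ x_m} be the isotonic cone and let b ∈ K. Fix quantile levels α₁ < α₂ < … < α_m in (0,1) and an outcome y ∈ ℝ. Define g(θ) ∈ ℝ^m by g(θ)_i = 1{y ≤ b_i + θ_i} − α_i. Then for every θ ∈ K − b, there exists β > 0 such that θ − ε g(θ) ∈ K − b for all ε ∈ [0, β]. In particular, −g(θ) lies in the tangent cone of K − b at θ for all θ in K − b. -/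
/-- Inward flow of the MultiQT gradient field on the shifted isotonic cone:
for every `θ ∈ K - b` there is `β > 0` with `θ - ε g(θ) ∈ K - b` for all `ε ∈ [0, β]`,
and in particular `-g(θ)` lies in the tangent cone of `K - b` at `θ`. -/
theorem stmt_8 {m : ℕ} (α : Fin m → ℝ) (hα : StrictMono α)
    (hα01 : ∀ i, α i ∈ Set.Ioo (0:ℝ) 1)
    (b : EuclideanSpace ℝ (Fin m)) (hb : Monotone b) (y : ℝ)
    (θ : EuclideanSpace ℝ (Fin m))
    (hθ : θ ∈ {x : EuclideanSpace ℝ (Fin m) | Monotone (fun i => b i + x i)})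
    (g : EuclideanSpace ℝ (Fin m))
    (hg : ∀ i, g i = (if y ≤ b i + θ i then (1:ℝ) else 0) - α i) :
    (∃ β > (0:ℝ), ∀ ε : ℝ, 0 ≤ ε → ε ≤ β →
      θ - ε • g ∈ {x : EuclideanSpace ℝ (Fin m) | Monotone (fun i => b i + x i)}) ∧
    -g ∈ paperTangentCone {x : EuclideanSpace ℝ (Fin m) | Monotone (fun i => b i + x i)} θ := by
  classical
  have hf : Monotone (fun i => b i + θ i) := hθ
  set T : Finset ℝ := insert 1 ((Finset.univ.filter
      (fun p : Fin m × Fin m => b p.1 + θ p.1 < b p.2 + θ p.2)).image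
      (fun p => (b p.2 + θ p.2 - (b p.1 + θ p.1)) / 2)) with hTdef
  have hTne : T.Nonempty := ⟨1, Finset.mem_insert_self _ _⟩
  set β := T.min' hTne with hβdef
  have hβpos : 0 < β := by
    rw [hβdef, Finset.lt_min'_iff]
    intro x hx
    rcases Finset.mem_insert.mp hx with h1 | h2
    · rw [h1]; norm_num
    · rcases Finset.mem_image.mp h2 with ⟨p, hp, rfl⟩
      have := (Finset.mem_filter.mp hp).2
      linarith
  have key : ∀ ε : ℝ, 0 ≤ ε → ε ≤ β →
      Monotone (fun i => b i + (θ - ε • g) i) := by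
    intro ε hε0 hεβ i j hij
    have happ : ∀ k, (θ - ε • g) k = θ k - ε * g k := fun k => by
      simp [PiLp.smul_apply, smul_eq_mul]
    simp only [happ]
    have hfij : b i + θ i ≤ b j + θ j := hf hij
    have hgi := hg i
    have hgj := hg j
    have hαij : α i ≤ α j := hα.monotone hij
    rcases lt_or_eq_of_le hfij with hlt | heq
    · have hmem : (b j + θ j - (b i + θ i)) / 2 ∈ T :=
        Finset.mem_insert_of_mem (Finset.mem_image.mpr
          ⟨(i, j), Finset.mem_filter.mpr ⟨Finset.mem_univ _, hlt⟩, rfl⟩)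
      have hβle : β ≤ (b j + θ j - (b i + θ i)) / 2 := Finset.min'_le _ _ hmem
      have hgd : g j - g i ≤ 2 := by
        rw [hgi, hgj]
        have h1 := (hα01 i).1
        have h2 := (hα01 j).2
        split_ifs <;> linarith
      have hε2 : ε ≤ (b j + θ j - (b i + θ i)) / 2 := le_trans hεβ hβle
      nlinarith [mul_le_mul_of_nonneg_left hgd hε0]
    · have hind : (if y ≤ b i + θ i then (1:ℝ) else 0)
          = (if y ≤ b j + θ j then (1:ℝ) else 0) := by rw [heq]
      have hgdiff : 0 ≤ g i - g j := by rw [hgi, hgj, hind]; linarith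
      nlinarith [mul_nonneg hε0 hgdiff]
  constructor
  · exact ⟨β, hβpos, fun ε h0 hβ' => key ε h0 hβ'⟩
  · apply subset_closure
    refine ⟨β, hβpos, fun ε h0 hβ' => ?_⟩
    have heq2 : θ + ε • (-g) = θ - ε • g := by rw [smul_neg, ← sub_eq_add_neg]
    rw [heq2]
    exact key ε h0 hβ'
end

section
/- Let α, β ∈ (0,1) with α < β and α + β = 1/2, and let η > 0, q ∈ ℝ. Starting from θ₁^α = θ₁^β = q, apply one quantile-tracker step with outcome y₁ > q (so both forecasts miss), giving θ₂^α = q + ηα, θ₂^β = q + ηβ, then a second step with outcome y₂ ∈ (θ₂^α, θ₂^β], giving θ̃₃^α = q + 2ηα and θ̃₃^β = q + η(2β − 1). Then θ̃₃^α > θ̃₃^β (the quantiles cross), and the isotonic projection pools them to the common value (θ̃₃^α + θ̃₃^β)/2 = q. -/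
/-- The projected-gradient-descent counterexample step: with levels `α < β`,
`α + β = 1/2`, after one miss (`y₁ > q`) and one landing between the forecasts,
the quantile-tracker iterates cross (`θ̃₃ᵅ > θ̃₃ᵝ`) and isotonic projection pools them
back to exactly `q`. -/
theorem stmt_16 (α β η q y1 y2 : ℝ)
    (hα : 0 < α) (hαβ : α < β) (hβ : β < 1) (hsum : α + β = 1 / 2)
    (hη : 0 < η) (hy1 : q < y1)
    (θ2a θ2b : ℝ)
    (h2a : θ2a = q - η * ((if y1 ≤ q then (1:ℝ) else 0) - α))
    (h2b : θ2b = q - η * ((if y1 ≤ q then (1:ℝ) else 0) - β))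
    (hy2l : θ2a < y2) (hy2r : y2 ≤ θ2b)
    (θ3a θ3b : ℝ)
    (h3a : θ3a = θ2a - η * ((if y2 ≤ θ2a then (1:ℝ) else 0) - α))
    (h3b : θ3b = θ2b - η * ((if y2 ≤ θ2b then (1:ℝ) else 0) - β)) :
    θ2a = q + η * α ∧ θ2b = q + η * β ∧
    θ3a = q + 2 * η * α ∧ θ3b = q + η * (2 * β - 1) ∧
    θ3b < θ3a ∧ (θ3a + θ3b) / 2 = q := by
  rw [if_neg (not_le.2 hy1)] at h2a h2b
  rw [if_neg (not_le.2 hy2l), h2a] at h3a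
  rw [if_pos hy2r, h2b] at h3b
  refine ⟨by linarith, by linarith, by ring_nf; linarith [h3a], by ring_nf; linarith [h3b], ?_, ?_⟩
  · rw [h3a, h3b]; nlinarith
  · rw [h3a, h3b]; ring_nf; nlinarith
end

section
/- Consider the MultiQT recursion with level-agnostic base forecasts: hidden iterates θ̃_t ∈ ℝ^m with θ̃₁ ordered (θ̃₁^{i} ≤ θ̃₁^{i+1}), played iterates θ_t = Π_K(θ̃_t) where K is the isotonic cone, coverage indicators cov_t^i = 1{y_t ≤ k_t + θ_t^i}, and update θ̃_{t+1}^i = θ̃_t^i − η(cov_t^i − α_i) with α₁ < … < α_m in (0,1). Then for all t and all i = 1, …, m−1, θ̃_t^i − θ̃_t^{i+1} ≤ η. -/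
lemma pool_aux {m : ℕ} (w θ : EuclideanSpace ℝ (Fin m)) (hmθ : Monotone θ)
    (hmin : ∀ u : EuclideanSpace ℝ (Fin m), Monotone u → ‖w - θ‖ ≤ ‖w - u‖)
    (i j : Fin m) (hij : (i : ℕ) + 1 = (j : ℕ)) (hw : w j < w i) : θ i = θ j := by
  by_contra hne
  have hijle : i ≤ j := by rw [Fin.le_def]; omega
  have hθlt : θ i < θ j := lt_of_le_of_ne (hmθ hijle) hne
  set δ : ℝ := θ j - θ i with hδ
  set d : ℝ := (w i - w j) + δ with hd
  have hδpos : 0 < δ := by simp only [hδ]; linarith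
  have hdpos : 0 < d := by simp only [hd]; linarith
  set ε : ℝ := min (δ / 2) (d / 2) with hε
  have hεpos : 0 < ε := lt_min (by linarith) (by linarith)
  have hεδ : ε ≤ δ / 2 := min_le_left _ _
  have hεd : ε ≤ d / 2 := min_le_right _ _
  set u : EuclideanSpace ℝ (Fin m) :=
    WithLp.toLp 2 (fun l => if l = i then θ i + ε else if l = j then θ j - ε else θ l) with hu
  have hinej : i ≠ j := by intro h; rw [h] at hij; omega
  have huapp : ∀ l : Fin m, u l = if l = i then θ i + ε else if l = j then θ j - ε else θ l :=
    fun l => rfl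
  have hmu : Monotone u := by
    intro a b hab
    have hab' : (a : ℕ) ≤ (b : ℕ) := hab
    rw [huapp, huapp]
    by_cases hai : a = i
    · rw [if_pos hai]
      have hav : (a : ℕ) = (i : ℕ) := by rw [hai]
      by_cases hbi : b = i
      · rw [if_pos hbi]
      · rw [if_neg hbi]
        have hbv : (b : ℕ) ≠ (i : ℕ) := fun h => hbi (Fin.ext h)
        have hbge : (j : ℕ) ≤ (b : ℕ) := by omega
        by_cases hbj : b = j
        · rw [if_pos hbj]; linarith
        · rw [if_neg hbj]
          have : j ≤ b := by rw [Fin.le_def]; omega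
          have := hmθ this
          linarith
    · rw [if_neg hai]
      by_cases haj : a = j
      · rw [if_pos haj]
        have hav : (a : ℕ) = (j : ℕ) := by rw [haj]
        by_cases hbi : b = i
        · exfalso
          have hbv : (b : ℕ) = (i : ℕ) := by rw [hbi]
          omega
        · rw [if_neg hbi]
          by_cases hbj : b = j
          · rw [if_pos hbj]
          · rw [if_neg hbj]
            have : j ≤ b := by rw [Fin.le_def]; omega
            have := hmθ this
            linarith
      · rw [if_neg haj]
        by_cases hbi : b = i
        · rw [if_pos hbi]
          have : a ≤ i := hbi ▸ hab
          have := hmθ this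
          linarith
        · rw [if_neg hbi]
          by_cases hbj : b = j
          · rw [if_pos hbj]
            have hav : (a : ℕ) ≠ (j : ℕ) := fun h => haj (Fin.ext h)
            have hbv : (b : ℕ) = (j : ℕ) := by rw [hbj]
            have : a ≤ i := by rw [Fin.le_def]; omega
            have := hmθ this
            linarith
          · rw [if_neg hbj]
            exact hmθ hab
  have hle := hmin u hmu
  -- compute squared norms
  have hsq : ∀ v : EuclideanSpace ℝ (Fin m), ‖w - v‖ ^ 2 = ∑ l, (w l - v l) ^ 2 := by
    intro v
    rw [EuclideanSpace.norm_eq]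
    rw [Real.sq_sqrt (by positivity)]
    congr 1; ext l; simp [Real.norm_eq_abs, sq_abs]
  have hpt : ∀ l : Fin m, (w l - u l) ^ 2 = (w l - θ l) ^ 2 +
      ((if l = i then -2 * ε * (w i - θ i) + ε ^ 2 else 0) +
       (if l = j then 2 * ε * (w j - θ j) + ε ^ 2 else 0)) := by
    intro l
    rw [huapp]
    by_cases h1 : l = i
    · subst h1; simp [hinej]; ring
    · by_cases h2 : l = j
      · subst h2; simp [h1]; ring
      · simp [h1, h2]
  have hsum : ‖w - u‖ ^ 2 = ‖w - θ‖ ^ 2 +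
      ((-2 * ε * (w i - θ i) + ε ^ 2) + (2 * ε * (w j - θ j) + ε ^ 2)) := by
    rw [hsq, hsq]
    rw [Finset.sum_congr rfl (fun l _ => hpt l)]
    rw [Finset.sum_add_distrib, Finset.sum_add_distrib]
    simp [Finset.sum_ite_eq']
  have hlt : ‖w - u‖ ^ 2 < ‖w - θ‖ ^ 2 := by
    rw [hsum]
    have : (-2 * ε * (w i - θ i) + ε ^ 2) + (2 * ε * (w j - θ j) + ε ^ 2)
        = -2 * ε * d + 2 * ε ^ 2 := by simp only [hd, hδ]; ring
    rw [this]
    nlinarith [hεpos, hεd, hdpos]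
  have h1 : ‖w - θ‖ ^ 2 ≤ ‖w - u‖ ^ 2 := by
    have := norm_nonneg (w - θ)
    nlinarith [hle]
  linarith

/-- With level-agnostic (point) base forecasts, adjacent hidden MultiQT iterates can only
get crossed by at most `η`: `θ̃_tⁱ - θ̃_tⁱ⁺¹ ≤ η` for all `t` and adjacent indices. -/
theorem stmt_17 {m : ℕ} (η : ℝ) (hη : 0 < η)
    (α : Fin m → ℝ) (hmono : StrictMono α) (hα : ∀ i, α i ∈ Set.Ioo (0:ℝ) 1)
    (y k : ℕ → ℝ)
    (w θ : ℕ → EuclideanSpace ℝ (Fin m))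
    (hinit : Monotone (w 1))
    (hproj : ∀ t ≥ 1, Monotone (θ t) ∧
      ∀ u : EuclideanSpace ℝ (Fin m), Monotone u → ‖w t - θ t‖ ≤ ‖w t - u‖)
    (hupd : ∀ t ≥ 1, ∀ i : Fin m,
      w (t + 1) i = w t i - η * ((if y t ≤ k t + θ t i then (1:ℝ) else 0) - α i)) :
    ∀ t ≥ 1, ∀ i j : Fin m, (i : ℕ) + 1 = (j : ℕ) → w t i - w t j ≤ η := by
  intro t
  induction t with
  | zero => intro h; omega
  | succ n ih =>
    intro _ i j hij
    have hijlt : i < j := by rw [Fin.lt_def]; omega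
    have hαlt : α i < α j := hmono hijlt
    by_cases hn : 1 ≤ n
    · have ihn := ih hn i j hij
      obtain ⟨hmθ, hmin⟩ := hproj n hn
      have hui := hupd n hn i
      have huj := hupd n hn j
      by_cases hw : w n j < w n i
      · have hpool : θ n i = θ n j := pool_aux (w n) (θ n) hmθ hmin i j hij hw
        rw [hui, huj, hpool]
        split_ifs <;> nlinarith
      · push_neg at hw
        rw [hui, huj]
        have h0 : (0:ℝ) < α i := (hα i).1
        have h1' : α j < 1 := (hα j).2
        split_ifs <;> nlinarith
    · have hn0 : n = 0 := by omega
      subst hn0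
      have : w 1 i ≤ w 1 j := hinit (le_of_lt hijlt)
      linarith
end

section
/- Let θ̃ ∈ ℝ^m satisfy θ̃_i − θ̃_{i+1} ≤ η for all i = 1, …, m−1, for some η > 0. Then the Euclidean distance from θ̃ to the isotonic cone K = {x : x₁ ≤ … ≤ x_m} satisfies ‖θ̃ − Π_K(θ̃)‖₂ ≤ η √(m(m−1)(2m−1)/6) ≤ η m^{3/2}/√3. -/
lemma sum_sq_fin (m : ℕ) :
    ∑ i : Fin m, ((i : ℝ))^2 = (m * (m - 1) * (2 * m - 1) : ℝ) / 6 := by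
  induction m with
  | zero => simp
  | succ n ih =>
      rw [Fin.sum_univ_castSucc]
      simp only [Fin.coe_castSucc, Fin.val_last] at *
      rw [ih]
      push_cast
      ring

/-- A vector whose adjacent coordinates are crossed by at most `η` is within Euclidean
distance `η √(m(m-1)(2m-1)/6) ≤ η m^{3/2}/√3` of the isotonic cone. -/
theorem stmt_18 {m : ℕ} (η : ℝ) (hη : 0 < η)
    (w : EuclideanSpace ℝ (Fin m))
    (hgap : ∀ i j : Fin m, (i : ℕ) + 1 = (j : ℕ) → w i - w j ≤ η)
    (p : EuclideanSpace ℝ (Fin m)) (hpK : Monotone p)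
    (hp : ∀ u : EuclideanSpace ℝ (Fin m), Monotone u → ‖w - p‖ ≤ ‖w - u‖) :
    ‖w - p‖ ≤ η * Real.sqrt ((m * (m - 1) * (2 * m - 1) : ℝ) / 6) ∧
    η * Real.sqrt ((m * (m - 1) * (2 * m - 1) : ℝ) / 6) ≤
      η * ((m : ℝ) * Real.sqrt m) / Real.sqrt 3 := by
  -- telescoping bound
  have tel : ∀ k : ℕ, ∀ i j : Fin m, (j : ℕ) + k = (i : ℕ) → w j - w i ≤ η * k := by
    intro k
    induction k with
    | zero =>
        intro i j h
        have : j = i := Fin.ext (by omega)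
        subst this; simp
    | succ n ih =>
        intro i j h
        have hlt : (j : ℕ) + n < m := by omega
        set i' : Fin m := ⟨(j : ℕ) + n, hlt⟩
        have h1 : w j - w i' ≤ η * n := ih i' j rfl
        have h2 : w i' - w i ≤ η := hgap i' i (by simp [i']; omega)
        push_cast
        nlinarith
  -- running maximum
  let u : EuclideanSpace ℝ (Fin m) := WithLp.toLp 2 (fun i => (Finset.Iic i).sup' ⟨i, Finset.mem_Iic.2 le_rfl⟩ w)
  have humono : Monotone u := by
    intro a b hab
    refine Finset.sup'_le ⟨a, Finset.mem_Iic.2 le_rfl⟩ _ ?_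
    intro j hj
    exact Finset.le_sup' w (Finset.mem_Iic.2 ((Finset.mem_Iic.1 hj).trans hab))
  have hw_le_u : ∀ i, w i ≤ u i := fun i => Finset.le_sup' w (Finset.mem_Iic.2 le_rfl)
  have hbound : ∀ i : Fin m, u i - w i ≤ η * i := by
    intro i
    obtain ⟨j, hj, hju⟩ := Finset.exists_mem_eq_sup' ⟨i, Finset.mem_Iic.2 le_rfl⟩ w
    show (Finset.Iic i).sup' ⟨i, Finset.mem_Iic.2 le_rfl⟩ w - w i ≤ η * i
    rw [hju]
    have hji : (j : ℕ) ≤ (i : ℕ) := Fin.le_def.mp (Finset.mem_Iic.mp hj)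
    have := tel ((i : ℕ) - (j : ℕ)) i j (by omega)
    calc w j - w i ≤ η * (((i : ℕ) - (j : ℕ) : ℕ) : ℝ) := this
      _ ≤ η * i := by
          apply mul_le_mul_of_nonneg_left _ hη.le
          have : ((i : ℕ) - (j : ℕ) : ℕ) ≤ (i : ℕ) := Nat.sub_le _ _
          exact_mod_cast this
  -- norm bound
  have hnorm : ‖w - u‖ ≤ η * Real.sqrt ((m * (m - 1) * (2 * m - 1) : ℝ) / 6) := by
    rw [EuclideanSpace.norm_eq]
    have hsum : ∑ i, ‖(w - u) i‖ ^ 2 ≤ ∑ i : Fin m, (η * i)^2 := by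
      apply Finset.sum_le_sum
      intro i _
      have h1 : |(w - u) i| ≤ η * i := by
        have : (w - u) i = w i - u i := rfl
        rw [this, abs_le]
        constructor
        · nlinarith [hbound i]
        · have := hw_le_u i
          have h0 : (0:ℝ) ≤ η * i := by positivity
          linarith
      calc ‖(w - u) i‖ ^ 2 = |(w - u) i| ^ 2 := by rw [Real.norm_eq_abs]
        _ ≤ (η * i)^2 := pow_le_pow_left₀ (abs_nonneg _) h1 2
    calc Real.sqrt (∑ i, ‖(w - u) i‖ ^ 2) ≤ Real.sqrt (∑ i : Fin m, (η * i)^2) :=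
          Real.sqrt_le_sqrt hsum
      _ = η * Real.sqrt ((m * (m - 1) * (2 * m - 1) : ℝ) / 6) := by
          have : ∑ i : Fin m, (η * i)^2 = η^2 * ((m * (m - 1) * (2 * m - 1) : ℝ) / 6) := by
            rw [← sum_sq_fin m, Finset.mul_sum]
            congr 1; ext i; ring
          rw [this, Real.sqrt_mul (by positivity), Real.sqrt_sq hη.le]
  constructor
  · exact (hp u humono).trans hnorm
  · have hle : (m * (m - 1) * (2 * m - 1) : ℝ) / 6 ≤ ((m:ℝ) * Real.sqrt m / Real.sqrt 3)^2 := by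
      have h3 : ((m:ℝ) * Real.sqrt m / Real.sqrt 3)^2 = (m:ℝ)^2 * m / 3 := by
        rw [div_pow, mul_pow, Real.sq_sqrt (by positivity : (0:ℝ) ≤ (m:ℝ)),
          Real.sq_sqrt (by norm_num : (0:ℝ) ≤ 3)]
      rw [h3]
      rcases Nat.eq_zero_or_pos m with h | h
      · subst h; norm_num
      · have : (1:ℝ) ≤ m := by exact_mod_cast h
        nlinarith
    have hA : Real.sqrt ((m * (m - 1) * (2 * m - 1) : ℝ) / 6) ≤ (m:ℝ) * Real.sqrt m / Real.sqrt 3 :=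
      (Real.sqrt_le_sqrt hle).trans_eq (Real.sqrt_sq (by positivity))
    calc η * Real.sqrt ((m * (m - 1) * (2 * m - 1) : ℝ) / 6)
        ≤ η * ((m:ℝ) * Real.sqrt m / Real.sqrt 3) := mul_le_mul_of_nonneg_left hA hη.le
      _ = η * ((m : ℝ) * Real.sqrt m) / Real.sqrt 3 := by ring
end

section
/- Let C ⊆ ℝ^m be closed convex, g : ℝ^m → ℝ^m, and suppose: (i) there exist h ≥ 0 and a function φ with ⟨θ, g(θ)⟩ ≥ φ(θ) whenever ‖θ‖₂ > h; (ii) for every θ on the boundary of C, −g(θ) ∈ T_C(θ); (iii) ‖Π_C(θ̃) − θ̃‖₂ ≤ B for a given θ̃ ∈ ℝ^m. If ‖θ̃‖₂ > h + B, then ⟨θ̃, g(Π_C(θ̃))⟩ ≥ φ(Π_C(θ̃)). -/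
/-- Restorativity plus inward flow plus bounded projection distance give
`⟨θ̃, g(Π_C(θ̃))⟩ ≥ φ(Π_C(θ̃))` whenever `‖θ̃‖ > h + B`. -/
theorem stmt_19 {m : ℕ} (C : Set (EuclideanSpace ℝ (Fin m)))
    (hne : C.Nonempty) (hclosed : IsClosed C) (hconv : Convex ℝ C)
    (g : EuclideanSpace ℝ (Fin m) → EuclideanSpace ℝ (Fin m))
    (h B : ℝ) (hh : 0 ≤ h)
    (φ : EuclideanSpace ℝ (Fin m) → ℝ)
    (hrest : ∀ θ, h < ‖θ‖ → (inner ℝ θ (g θ) : ℝ) ≥ φ θ)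
    (hflow : ∀ θ ∈ frontier C, -g θ ∈ paperTangentCone C θ)
    (w p : EuclideanSpace ℝ (Fin m))
    (hpC : p ∈ C) (hp : ∀ y ∈ C, ‖w - p‖ ≤ ‖w - y‖)
    (hB : ‖p - w‖ ≤ B)
    (hbig : h + B < ‖w‖) :
    (inner ℝ w (g p) : ℝ) ≥ φ p := by
  have hBnn : (0:ℝ) ≤ B := le_trans (norm_nonneg _) hB
  -- ‖p‖ > h
  have hwp : ‖w - p‖ ≤ B := by rwa [norm_sub_rev]
  have hpn : h < ‖p‖ := by
    have h1 : ‖w‖ - ‖p‖ ≤ ‖w - p‖ := norm_sub_norm_le w p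
    linarith
  have hrp : (inner ℝ p (g p) : ℝ) ≥ φ p := hrest p hpn
  -- variational inequality
  have hproj : ∀ y ∈ C, (inner ℝ (w - p) (y - p) : ℝ) ≤ 0 := by
    haveI : Nonempty C := ⟨⟨p, hpC⟩⟩
    have hbdd : BddBelow (Set.range fun z : C => ‖w - (z : EuclideanSpace ℝ (Fin m))‖) :=
      ⟨0, by rintro r ⟨z, rfl⟩; exact norm_nonneg _⟩
    have h1 : ‖w - p‖ ≤ ⨅ z : C, ‖w - (z : EuclideanSpace ℝ (Fin m))‖ :=
      le_ciInf fun z => hp z z.2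
    have h2 : (⨅ z : C, ‖w - (z : EuclideanSpace ℝ (Fin m))‖) ≤ ‖w - p‖ :=
      ciInf_le hbdd ⟨p, hpC⟩
    exact (norm_eq_iInf_iff_real_inner_le_zero hconv hpC).mp (le_antisymm h1 h2)
  -- suffices inner ℝ (w - p) (g p) ≥ 0
  have key : (0:ℝ) ≤ inner ℝ (w - p) (g p) := by
    by_cases hwep : w = p
    · simp [hwep]
    · -- p ∈ frontier C
      have hpint : p ∉ interior C := by
        intro hint
        rcases Metric.mem_nhds_iff.mp (mem_interior_iff_mem_nhds.mp hint) with ⟨ε, hε, hball⟩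
        have hwpn : (0:ℝ) < ‖w - p‖ := by
          rw [norm_pos_iff]; intro h0; exact hwep (by rwa [sub_eq_zero] at h0)
        set δ : ℝ := ε / (2 * ‖w - p‖) with hδdef
        have hδ : 0 < δ := by positivity
        have hy : p + δ • (w - p) ∈ C := by
          apply hball
          simp only [Metric.mem_ball, dist_eq_norm]
          have : ‖p + δ • (w - p) - p‖ = δ * ‖w - p‖ := by
            rw [add_sub_cancel_left, norm_smul, Real.norm_eq_abs, abs_of_pos hδ]
          have heq : δ * ‖w - p‖ = ε / 2 := by
            rw [hδdef]; field_simp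
          rw [this, heq]; linarith
        have := hproj _ hy
        rw [add_sub_cancel_left, real_inner_smul_right, real_inner_self_eq_norm_sq] at this
        nlinarith [mul_pos hδ (pow_pos hwpn 2)]
      have hpf : p ∈ frontier C := by
        rw [frontier, hclosed.closure_eq]
        exact ⟨hpC, hpint⟩
      have hgp := hflow p hpf
      -- every y in the generating set satisfies inner ℝ (w-p) y ≤ 0
      have hsub : {y : EuclideanSpace ℝ (Fin m) |
          ∃ β > (0:ℝ), ∀ ε : ℝ, 0 ≤ ε → ε ≤ β → p + ε • y ∈ C}
          ⊆ {y | (inner ℝ (w - p) y : ℝ) ≤ 0} := by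
        rintro y ⟨β, hβ, hy⟩
        have hmem := hy β (le_of_lt hβ) le_rfl
        have := hproj _ hmem
        rw [add_sub_cancel_left, real_inner_smul_right] at this
        have : (inner ℝ (w - p) y : ℝ) ≤ 0 := nonpos_of_mul_nonpos_right (by linarith [mul_comm β (inner ℝ (w-p) y : ℝ)]) hβ
        exact this
      have hclosedset : IsClosed {y : EuclideanSpace ℝ (Fin m) | (inner ℝ (w - p) y : ℝ) ≤ 0} :=
        isClosed_le (continuous_const.inner continuous_id) continuous_const
      have hmem : -g p ∈ {y : EuclideanSpace ℝ (Fin m) | (inner ℝ (w - p) y : ℝ) ≤ 0} :=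
        (hclosedset.closure_subset_iff.mpr hsub) hgp
      have : (inner ℝ (w - p) (-g p) : ℝ) ≤ 0 := hmem
      rw [inner_neg_right] at this
      linarith
  have : (inner ℝ w (g p) : ℝ) = inner ℝ (w - p) (g p) + inner ℝ p (g p) := by
    rw [← inner_add_left]; rw [sub_add_cancel]
  linarith
end
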